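/- Let C ≥ 1 be a natural number and S_1, …, S_N pairwise disjoint finite sets with N ≥ 2^(8C) and |S_j| ≥ 8C for every j ≤ N; put S = S_1 ∪ … ∪ S_N. Consider the following ω-length alternating game between Alice and Bob: each element s ∈ S carries rational weights A(s) ≥ 0 (Alice's) and B(s) ≥ 0 (Bob's), all initially 0; on each of her moves Alice may increase her weights on finitely many elements, and on each of his moves Bob may increase his weights on finitely many elements and may irreversibly disable some elements. At all times the totals must satisfy Σ_{s∈S} A(s) ≤ 1 and Σ_{s∈S} B(s) ≤ 1; Bob must be fair, i.e., at all times all elements of the same S_j carry equal Bob-weight; and Bob may never have disabled all elements of any S_j. Alice wins if in the limit position there exists a non-disabled s ∈ S with A(s) ≥ C·B(s). Then Alice has a winning strategy (moreover a computable one, uniformly in the parameters). -/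

import Mathlib

open scoped BigOperators

/-- A state of Bob: his current weight function together with his current set of disabled
elements. -/
abbrev BobState (α : Type) := (α → ℚ) × Set α

/-- A strategy for Alice: her new (cumulative) weight function as a function of the list
of Bob's previous states. -/
abbrev AStrat (α : Type) := List (BobState α) → (α → ℚ)

/-- A strategy for Bob: his new state as a function of the list of Alice's weight
functions so far (including the one of the current round, since Alice moves first). -/
abbrev BStrat (α : Type) := List (α → ℚ) → BobState α

/-- The history of the first `k` rounds of the play `σ` versus `τ` (Alice moves first in
each round). -/
def ghist {α : Type} (σ : AStrat α) (τ : BStrat α) : ℕ → List ((α → ℚ) × BobState α)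
  | 0 => []
  | k + 1 =>
    let h := ghist σ τ k
    let am := σ (h.map Prod.snd)
    let bm := τ (h.map Prod.fst ++ [am])
    h ++ [(am, bm)]

/-- Alice's weight function after her move of round `k`. -/
def amove {α : Type} (σ : AStrat α) (τ : BStrat α) (k : ℕ) : α → ℚ :=
  σ ((ghist σ τ k).map Prod.snd)

/-- Bob's state after his move of round `k`. -/
def bmove {α : Type} (σ : AStrat α) (τ : BStrat α) (k : ℕ) : BobState α :=
  τ ((ghist σ τ k).map Prod.fst ++ [amove σ τ k])

/-- The union of the sets `S j`. -/
def SU {α : Type} [DecidableEq α] {N : ℕ} (S : Fin N → Finset α) : Finset α :=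
  Finset.univ.biUnion S

/-- Alice's move of round `k` is legal: her weights only increase, only finitely many of
them change, they are supported on `S = ⋃ j, S j`, and their total is at most `1`.
(Since the weights start at `0` and only increase, they are automatically nonnegative.) -/
def AliceLegal {α : Type} [DecidableEq α] {N : ℕ} (S : Fin N → Finset α)
    (A : ℕ → α → ℚ) (k : ℕ) : Prop :=
  let prev : α → ℚ := if k = 0 then 0 else A (k - 1)
  (∀ s, prev s ≤ A k s) ∧
  {s | A k s ≠ prev s}.Finite ∧
  (∀ s, s ∉ SU S → A k s = 0) ∧
  (∑ s ∈ SU S, A k s) ≤ 1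

/-- Bob's move of round `k` is legal: his weights only increase and are supported on
`S = ⋃ j, S j` with total at most `1`; he is fair (all elements of the same `S j` carry
equal weight); disabling is irreversible; and in no `S j` are all elements disabled. -/
def BobLegal {α : Type} [DecidableEq α] {N : ℕ} (S : Fin N → Finset α)
    (B : ℕ → α → ℚ) (D : ℕ → Set α) (k : ℕ) : Prop :=
  let prev : α → ℚ := if k = 0 then 0 else B (k - 1)
  let prevD : Set α := if k = 0 then ∅ else D (k - 1)
  (∀ s, prev s ≤ B k s) ∧
  (∀ s, s ∉ SU S → B k s = 0) ∧
  (∑ s ∈ SU S, B k s) ≤ 1 ∧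
  (∀ j : Fin N, ∀ s ∈ S j, ∀ t ∈ S j, B k s = B k t) ∧
  prevD ⊆ D k ∧
  (∀ j : Fin N, ∃ s ∈ S j, s ∉ D k)

/-- Alice wins in the limit: some element `s` that is never disabled satisfies
`A(s) ≥ C·B(s)` for the limit weights `A(s) = sup_k A_k(s)` and `B(s) = sup_k B_k(s)`. -/
def AliceLimitWin {α : Type} (C : ℕ) (A B : ℕ → α → ℚ) (D : ℕ → Set α) : Prop :=
  ∃ s : α, (∀ k, s ∉ D k) ∧
    (C : ℝ) * (⨆ k, ((B k s : ℝ))) ≤ ⨆ k, ((A k s : ℝ))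

/-- Alice wins the play `σ` versus `τ`: either Bob is the first to break a rule (at some
round `k`, Alice having played legally at all her moves up to and including round `k`),
or both play legally forever and Alice wins in the limit. -/
def AliceWins {α : Type} [DecidableEq α] {N : ℕ} (C : ℕ) (S : Fin N → Finset α)
    (σ : AStrat α) (τ : BStrat α) : Prop :=
  let A : ℕ → α → ℚ := amove σ τ
  let B : ℕ → α → ℚ := fun k => (bmove σ τ k).1
  let D : ℕ → Set α := fun k => (bmove σ τ k).2
  (∃ k : ℕ, ¬ BobLegal S B D k ∧ ∀ j ≤ k, AliceLegal S A j) ∨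
  ((∀ k, AliceLegal S A k ∧ BobLegal S B D k) ∧ AliceLimitWin C A B D)

/-!
Alice plays in one set at a time, the least `S j` that Bob has not yet *finished*. There she
stakes weight on an enabled element and waits as long as one of her staked elements in `S j` is
enabled; once all are disabled she stakes the next stake on a fresh enabled element. With
`c = 8 C` and `m = |S j|`, the `i`-th stake in `S j` is `(c / m) 2 ^ ⌊i / ⌈m / c⌉⌋ / 2 ^ (c + 2)`:
it doubles every `⌈m / c⌉` attempts, so the at most `m` stakes in `S j` total at most `1 / 2`,
and the stakes made so far total at most `4 / c` times `m` times the latest one.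

Bob finishes `S j` when `C` times his total weight on it, spread evenly by fairness, exceeds `m`
times Alice's latest stake. This costs him at least twice what Alice spent in `S j`, and more than
`2 / 2 ^ (8 C)`, so he can never finish all `N ≥ 2 ^ (8 C)` sets. Since at most one set in which
Alice has staked is unfinished, her total is at most `1 / 2 + 1 / 2`.

Her attempts only grow and are bounded, so they stop changing; then the unfinished sets stop
changing, Alice waits forever in the same set, and her last attempt there is never disabled. It
carries her latest stake, which bounds `C` times Bob's weight on it at every round.
-/

namespace WeightGame

open Finset

section Stakes

def blockLen (c m : ℕ) : ℕ := (m + c - 1) / c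

def stake (c m i : ℕ) : ℚ := c / m * 2 ^ (i / blockLen c m) / 2 ^ (c + 2)

variable {c m : ℕ}

lemma blockLen_pos (hc : 0 < c) (hm : c ≤ m) : 0 < blockLen c m :=
  Nat.div_pos (by omega) hc

lemma le_mul_blockLen (hc : 0 < c) : m ≤ c * blockLen c m := by
  have := Nat.div_add_mod (m + c - 1) c
  have := Nat.mod_lt (m + c - 1) hc
  unfold blockLen
  omega

lemma mul_blockLen_le (hm : c ≤ m) : c * blockLen c m ≤ 2 * m := by
  have := Nat.div_add_mod (m + c - 1) c
  unfold blockLen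
  omega

lemma sum_range_mul_two_pow_div {q : ℕ} (hq : 0 < q) (t : ℕ) :
    ∑ i ∈ range (q * t), (2 : ℚ) ^ (i / q) = q * (2 ^ t - 1) := by
  induction t with
  | zero => simp
  | succ t ih =>
    have hblock : ∀ x ∈ range q, (2 : ℚ) ^ ((q * t + x) / q) = 2 ^ t := fun x hx => by
      rw [Nat.mul_add_div hq, Nat.div_eq_of_lt (mem_range.mp hx), add_zero]
    rw [Nat.mul_succ, sum_range_add, ih, sum_congr rfl hblock, sum_const, card_range,
      nsmul_eq_mul, pow_succ]
    ring

lemma sum_range_two_pow_div_le {q : ℕ} (hq : 0 < q) (n : ℕ) :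
    ∑ i ∈ range n, (2 : ℚ) ^ (i / q) ≤ 2 * q * 2 ^ ((n - 1) / q) := by
  have hn : n ≤ q * ((n - 1) / q + 1) := by
    have := Nat.div_add_mod (n - 1) q
    have := Nat.mod_lt (n - 1) hq
    rw [Nat.mul_succ]
    omega
  set L := (n - 1) / q
  calc ∑ i ∈ range n, (2 : ℚ) ^ (i / q)
      ≤ ∑ i ∈ range (q * (L + 1)), (2 : ℚ) ^ (i / q) :=
        sum_le_sum_of_subset_of_nonneg (range_subset_range.2 hn) fun _ _ _ => by positivity
    _ = q * (2 ^ (L + 1) - 1) := sum_range_mul_two_pow_div hq _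
    _ ≤ 2 * q * 2 ^ L := by rw [pow_succ]; nlinarith [(Nat.cast_nonneg q : (0 : ℚ) ≤ q)]

lemma card_mul_stake (hm : 0 < m) (i : ℕ) :
    m * stake c m i = c * 2 ^ (i / blockLen c m) / 2 ^ (c + 2) := by
  unfold stake
  field_simp

lemma div_le_card_mul_stake (hm : 0 < m) (i : ℕ) : c / 2 ^ (c + 2) ≤ m * stake c m i := by
  rw [card_mul_stake hm]
  gcongr
  exact le_mul_of_one_le_right (Nat.cast_nonneg c) (one_le_pow₀ one_le_two)

lemma card_mul_stake_le (hc : 0 < c) (hm : c ≤ m) {i : ℕ} (hi : i < m) :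
    m * stake c m i ≤ c / 8 := by
  have hlevel : i / blockLen c m ≤ c - 1 := by
    have := le_mul_blockLen (m := m) hc
    have : i / blockLen c m < c := (Nat.div_lt_iff_lt_mul (blockLen_pos hc hm)).2 (by lia)
    omega
  rw [card_mul_stake (by omega), show c + 2 = c - 1 + 3 by omega]
  calc (c : ℚ) * 2 ^ (i / blockLen c m) / 2 ^ (c - 1 + 3)
      ≤ c * 2 ^ (c - 1) / 2 ^ (c - 1 + 3) := by
        gcongr
        norm_num
    _ = c / 8 := by rw [pow_add]; field_simp; norm_num

lemma mul_sum_stake_le (hc : 0 < c) (hm : c ≤ m) (n : ℕ) :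
    c * ∑ i ∈ range n, stake c m i ≤ 4 * (m * stake c m (n - 1)) := by
  set q := blockLen c m
  have hm0 : (0 : ℚ) < m := by exact_mod_cast (show 0 < m by omega)
  have hsum : ∑ i ∈ range n, stake c m i =
      c / m / 2 ^ (c + 2) * ∑ i ∈ range n, (2 : ℚ) ^ (i / q) := by
    rw [mul_sum]
    exact sum_congr rfl fun i _ => by unfold stake; ring
  have hq : (c : ℚ) * q ≤ 2 * m := by exact_mod_cast mul_blockLen_le hm
  rw [hsum, card_mul_stake (by omega)]
  calc (c : ℚ) * (c / m / 2 ^ (c + 2) * ∑ i ∈ range n, (2 : ℚ) ^ (i / q))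
      ≤ c * (c / m / 2 ^ (c + 2) * (2 * q * 2 ^ ((n - 1) / q))) := by
        gcongr
        exact sum_range_two_pow_div_le (blockLen_pos hc hm) n
    _ = c / m / 2 ^ (c + 2) * (2 * 2 ^ ((n - 1) / q)) * (c * q) := by ring
    _ ≤ c / m / 2 ^ (c + 2) * (2 * 2 ^ ((n - 1) / q)) * (2 * m) := by gcongr
    _ = 4 * (c * 2 ^ ((n - 1) / q) / 2 ^ (c + 2)) := by field_simp; ring

lemma sum_stake_le_half (hc : 0 < c) (hm : c ≤ m) {n : ℕ} (hn : n ≤ m) :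
    ∑ i ∈ range n, stake c m i ≤ 1 / 2 := by
  rcases Nat.eq_zero_or_pos n with rfl | hn0
  · simp
  have h := (mul_sum_stake_le hc hm n).trans
    (mul_le_mul_of_nonneg_left (card_mul_stake_le hc hm (by omega : n - 1 < m)) zero_le_four)
  have hc0 : (0 : ℚ) < c := by exact_mod_cast hc
  nlinarith

lemma stake_nonneg (i : ℕ) : 0 ≤ stake c m i := by
  unfold stake
  positivity

end Stakes

section ListWeight

variable {α : Type} [DecidableEq α]

def listWeight (l : List α) (w : ℕ → ℚ) (s : α) : ℚ :=
  ∑ i ∈ range l.length, if l[i]? = some s then w i else 0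

variable {l : List α} {w : ℕ → ℚ}

@[simp]
lemma listWeight_nil (w : ℕ → ℚ) (s : α) : listWeight [] w s = 0 := by
  simp [listWeight]

lemma listWeight_concat (l : List α) (w : ℕ → ℚ) (x s : α) :
    listWeight (l ++ [x]) w s = listWeight l w s + if x = s then w l.length else 0 := by
  unfold listWeight
  rw [List.length_append, List.length_singleton, sum_range_succ, List.getElem?_concat_length]
  simp only [Option.some_inj]
  congr 1
  exact sum_congr rfl fun i hi => by rw [List.getElem?_append_left (mem_range.mp hi)]

lemma listWeight_nonneg (hw : ∀ i, 0 ≤ w i) (s : α) : 0 ≤ listWeight l w s :=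
  sum_nonneg fun i _ => by split_ifs <;> simp [hw i]

lemma listWeight_eq_zero {s : α} (hs : s ∉ l) : listWeight l w s = 0 :=
  sum_eq_zero fun _ _ => if_neg fun h => hs (List.mem_of_getElem? h)

lemma sum_listWeight {T : Finset α} (hl : ∀ x ∈ l, x ∈ T) :
    ∑ s ∈ T, listWeight l w s = ∑ i ∈ range l.length, w i := by
  unfold listWeight
  rw [sum_comm]
  refine sum_congr rfl fun i hi => ?_
  have hi : i < l.length := mem_range.mp hi
  simp only [List.getElem?_eq_getElem hi, Option.some_inj]
  rw [sum_ite_eq, if_pos (hl _ (List.getElem_mem hi))]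

lemma le_listWeight_getLast (hw : ∀ i, 0 ≤ w i) (hl : l ≠ []) :
    w (l.length - 1) ≤ listWeight l w (l.getLast hl) := by
  have hlen : l.length - 1 < l.length := by
    have := List.length_pos_iff.mpr hl
    omega
  have hterm : (if l[l.length - 1]? = some (l.getLast hl) then w (l.length - 1) else 0)
      = w (l.length - 1) :=
    if_pos (by rw [List.getElem?_eq_getElem hlen, List.getLast_eq_getElem])
  rw [← hterm]
  exact single_le_sum (f := fun i => if l[i]? = some (l.getLast hl) then w i else 0)
    (fun i _ => by split_ifs <;> simp [hw i]) (mem_range.mpr hlen)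

end ListWeight

section Strategy

variable {α : Type} {N : ℕ} (C : ℕ) (S : Fin N → Finset α)

/-- Bob has beaten Alice's latest stake in `S j`, the one of index `n - 1` (her first stake when
`n = 0`, by truncated subtraction). -/
def Finished (j : Fin N) (n : ℕ) (B : α → ℚ) : Prop :=
  (S j).card * stake (8 * C) (S j).card (n - 1) < C * ∑ s ∈ S j, B s

/-- The set Alice currently plays in. -/
def IsCurrent (att : Fin N → List α) (B : α → ℚ) (j : Fin N) : Prop :=
  ¬ Finished C S j (att j).length B ∧ ∀ i < j, Finished C S i (att i).length B

open Classical in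
noncomputable def unfinished (att : Fin N → List α) (B : α → ℚ) : Finset (Fin N) :=
  univ.filter fun j => ¬ Finished C S j (att j).length B

open Classical in
noncomputable def step (att : Fin N → List α) (b : BobState α) : Fin N → List α :=
  if hU : (unfinished C S att b.1).Nonempty then
    let j := (unfinished C S att b.1).min' hU
    if h : (∀ s ∈ att j, s ∈ b.2) ∧ ∃ s ∈ S j, s ∉ b.2 then
      Function.update att j (att j ++ [h.2.choose])
    else att
  else att

def weights [DecidableEq α] (att : Fin N → List α) (s : α) : ℚ :=
  ∑ j, listWeight (att j) (stake (8 * C) (S j).card) s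

noncomputable def alice [DecidableEq α] : AStrat α :=
  fun l => weights C S (l.foldl (step C S) fun _ => [])

variable {C S}

lemma Finished.mono {j : Fin N} {n : ℕ} {B B' : α → ℚ} (h : Finished C S j n B)
    (hB : B ≤ B') : Finished C S j n B' :=
  h.trans_le (by gcongr with s; exact hB s)

lemma unfinished_anti {att : Fin N → List α} {B B' : α → ℚ} (hB : B ≤ B') :
    unfinished C S att B' ⊆ unfinished C S att B := by
  classical
  intro j hj
  simp only [unfinished, mem_filter, mem_univ, true_and] at hj ⊢
  exact fun hfin => hj (hfin.mono hB)

lemma isCurrent_iff_isLeast {att : Fin N → List α} {B : α → ℚ} {j : Fin N} :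
    IsCurrent C S att B j ↔ IsLeast (unfinished C S att B : Set (Fin N)) j := by
  classical
  simp only [IsCurrent, unfinished, IsLeast, lowerBounds, coe_filter, mem_univ, true_and,
    Set.mem_ofPred_eq]
  refine and_congr_right fun _ => ⟨fun h i hi => ?_, fun h i hi => ?_⟩
  · exact not_lt.mp fun hlt => hi (h i hlt)
  · exact not_not.mp fun hfin => not_le.mpr hi (h hfin)

lemma isCurrent_min' {att : Fin N → List α} {B : α → ℚ}
    (hU : (unfinished C S att B).Nonempty) :
    IsCurrent C S att B ((unfinished C S att B).min' hU) :=
  isCurrent_iff_isLeast.mpr (isLeast_min' _ hU)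

lemma IsCurrent.min'_eq {att : Fin N → List α} {B : α → ℚ} {j : Fin N}
    (hj : IsCurrent C S att B j) (hU : (unfinished C S att B).Nonempty) :
    (unfinished C S att B).min' hU = j :=
  (isLeast_min' _ hU).unique (isCurrent_iff_isLeast.mp hj)

lemma step_cases (att : Fin N → List α) (b : BobState α) :
    step C S att b = att ∨ ∃ j x, IsCurrent C S att b.1 j ∧ (∀ s ∈ att j, s ∈ b.2) ∧
      x ∈ S j ∧ x ∉ b.2 ∧ step C S att b = Function.update att j (att j ++ [x]) := by
  unfold step
  by_cases hU : (unfinished C S att b.1).Nonempty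
  · rw [dif_pos hU]
    by_cases h : (∀ s ∈ att ((unfinished C S att b.1).min' hU), s ∈ b.2) ∧
        ∃ s ∈ S ((unfinished C S att b.1).min' hU), s ∉ b.2
    · rw [dif_pos h]
      exact Or.inr ⟨_, _, isCurrent_min' hU, h.1, h.2.choose_spec.1, h.2.choose_spec.2, rfl⟩
    · exact Or.inl (dif_neg h)
  · exact Or.inl (dif_neg hU)

lemma exists_enabled_of_step_eq {att : Fin N → List α} {b : BobState α} {j : Fin N}
    (hj : IsCurrent C S att b.1 j) (halive : ∃ s ∈ S j, s ∉ b.2)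
    (hstep : step C S att b = att) : ∃ s ∈ att j, s ∉ b.2 := by
  classical
  by_contra! hdis
  have hU : (unfinished C S att b.1).Nonempty := ⟨j, mem_filter.mpr ⟨mem_univ j, hj.1⟩⟩
  have hlen := congrArg (fun att => (att j).length) hstep
  unfold step at hlen
  rw [dif_pos hU] at hlen
  obtain rfl := hj.min'_eq hU
  rw [dif_pos ⟨hdis, halive⟩] at hlen
  simp at hlen

end Strategy

section Accounting

variable {α : Type} [DecidableEq α] {N : ℕ} {C : ℕ} {S : Fin N → Finset α}

lemma weights_nonneg (att : Fin N → List α) : 0 ≤ weights C S att :=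
  fun _ => sum_nonneg fun _ _ => listWeight_nonneg stake_nonneg _

lemma listWeight_le_weights (att : Fin N → List α) (j : Fin N) (s : α) :
    listWeight (att j) (stake (8 * C) (S j).card) s ≤ weights C S att s :=
  single_le_sum (f := fun j => listWeight (att j) (stake (8 * C) (S j).card) s)
    (fun _ _ => listWeight_nonneg stake_nonneg s) (mem_univ j)

lemma weights_update_concat (att : Fin N → List α) (j : Fin N) (x s : α) :
    weights C S (Function.update att j (att j ++ [x])) s
      = weights C S att s + if x = s then stake (8 * C) (S j).card (att j).length else 0 := by
  unfold weights
  rw [← sum_erase_add _ _ (mem_univ j), ← sum_erase_add _ _ (mem_univ j), Function.update_self,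
    listWeight_concat, ← add_assoc]
  congr 2
  exact sum_congr rfl fun i hi => by rw [Function.update_of_ne (ne_of_mem_erase hi)]

lemma weights_le_step (att : Fin N → List α) (b : BobState α) :
    weights C S att ≤ weights C S (step C S att b) := by
  intro s
  rcases step_cases (C := C) (S := S) att b with h | ⟨j, x, -, -, -, -, h⟩
  · rw [h]
  · rw [h, weights_update_concat]
    split_ifs
    · exact le_add_of_nonneg_right (stake_nonneg _)
    · rw [add_zero]

lemma finite_weights_step_ne (att : Fin N → List α) (b : BobState α) :
    {s | weights C S (step C S att b) s ≠ weights C S att s}.Finite := by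
  rcases step_cases (C := C) (S := S) att b with h | ⟨j, x, -, -, -, -, h⟩
  · simp [h]
  · refine (Set.finite_singleton x).subset fun s hs => ?_
    by_contra hne
    exact hs (by rw [h, weights_update_concat, if_neg (Ne.symm hne), add_zero])

lemma sum_SU (hdisj : ∀ i j : Fin N, i ≠ j → Disjoint (S i) (S j)) (f : α → ℚ) :
    ∑ s ∈ SU S, f s = ∑ j, ∑ s ∈ S j, f s :=
  sum_biUnion fun i _ j _ hij => hdisj i j hij

lemma mem_SU {s : α} {j : Fin N} (hs : s ∈ S j) : s ∈ SU S :=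
  mem_biUnion.mpr ⟨j, mem_univ j, hs⟩

lemma weights_eq_zero {att : Fin N → List α} (hsub : ∀ j, ∀ s ∈ att j, s ∈ S j) {s : α}
    (hs : s ∉ SU S) : weights C S att s = 0 :=
  sum_eq_zero fun j _ => listWeight_eq_zero fun hmem => hs (mem_SU (hsub j s hmem))

lemma sum_weights {att : Fin N → List α} (hsub : ∀ j, ∀ s ∈ att j, s ∈ S j) :
    ∑ s ∈ SU S, weights C S att s =
      ∑ j, ∑ i ∈ range (att j).length, stake (8 * C) (S j).card i := by
  unfold weights
  rw [sum_comm]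
  exact sum_congr rfl fun j _ => sum_listWeight fun s hs => mem_SU (hsub j s hs)

end Accounting

section Invariant

variable {α : Type} {N : ℕ} (C : ℕ) (S : Fin N → Finset α)

structure Invariant (att : Fin N → List α) (b : BobState α) : Prop where
  subset : ∀ j, ∀ s ∈ att j, s ∈ S j
  nodup : ∀ j, (att j).Nodup
  dropLast_disabled : ∀ j, ∀ s ∈ (att j).dropLast, s ∈ b.2
  finished_of_lt : ∀ j, att j ≠ [] → ∀ i < j, Finished C S i (att i).length b.1

variable {C S}

lemma invariant_nil (b : BobState α) : Invariant C S (fun _ => []) b :=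
  ⟨by simp, by simp, by simp, by simp⟩

lemma Invariant.mono {att : Fin N → List α} {b b' : BobState α} (h : Invariant C S att b)
    (hb : b ≤ b') : Invariant C S att b' :=
  ⟨h.subset, h.nodup, fun j s hs => hb.2 (h.dropLast_disabled j s hs),
    fun j hj i hi => (h.finished_of_lt j hj i hi).mono hb.1⟩

lemma Invariant.update_concat {att : Fin N → List α} {b : BobState α} {j : Fin N} {x : α}
    (h : Invariant C S att b) (hj : IsCurrent C S att b.1 j) (hdis : ∀ s ∈ att j, s ∈ b.2)
    (hx : x ∈ S j) (hxb : x ∉ b.2) :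
    Invariant C S (Function.update att j (att j ++ [x])) b := by
  have hlen : ∀ i ≠ j, (Function.update att j (att j ++ [x]) i).length = (att i).length :=
    fun i hi => by rw [Function.update_of_ne hi]
  refine ⟨fun i s hs => ?_, fun i => ?_, fun i s hs => ?_, fun i hi k hk => ?_⟩
  · rcases eq_or_ne i j with rfl | hij
    · rw [Function.update_self, List.mem_append, List.mem_singleton] at hs
      exact hs.elim (h.subset i s) fun hsx => hsx ▸ hx
    · rw [Function.update_of_ne hij] at hs
      exact h.subset i s hs
  · rcases eq_or_ne i j with rfl | hij
    · rw [Function.update_self]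
      exact (h.nodup i).append (List.nodup_singleton x)
        (List.disjoint_singleton.mpr fun hmem => hxb (hdis x hmem))
    · rw [Function.update_of_ne hij]
      exact h.nodup i
  · rcases eq_or_ne i j with rfl | hij
    · rw [Function.update_self, List.dropLast_concat] at hs
      exact hdis s hs
    · rw [Function.update_of_ne hij] at hs
      exact h.dropLast_disabled i s hs
  · -- `S j` is current, so no set with attempts lies above it
    have hkj : k ≠ j := by
      rintro rfl
      rcases eq_or_ne i k with rfl | hik
      · exact lt_irrefl i hk
      · rw [Function.update_of_ne hik] at hi
        exact hj.1 (h.finished_of_lt i hi k hk)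
    rw [hlen k hkj]
    rcases eq_or_ne i j with rfl | hij
    · exact hj.2 k hk
    · rw [Function.update_of_ne hij] at hi
      exact h.finished_of_lt i hi k hk

lemma Invariant.step {att : Fin N → List α} {b b' : BobState α} (h : Invariant C S att b)
    (hb : b ≤ b') : Invariant C S (step C S att b') b' := by
  rcases step_cases (C := C) (S := S) att b' with hs | ⟨j, x, hj, hdis, hx, hxb, hs⟩
  · rw [hs]
    exact h.mono hb
  · rw [hs]
    exact (h.mono hb).update_concat hj hdis hx hxb

lemma Invariant.length_le {att : Fin N → List α} {b : BobState α} (h : Invariant C S att b)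
    (j : Fin N) : (att j).length ≤ (S j).card := by
  classical
  rw [← List.toFinset_card_of_nodup (h.nodup j)]
  exact card_le_card fun s hs => h.subset j s (List.mem_toFinset.mp hs)

end Invariant

section Budget

variable {α : Type} {N C : ℕ} {S : Fin N → Finset α}

lemma sum_le_add_sum_of_le_except_one {ι M : Type*} [AddCommMonoid M] [LinearOrder M]
    [IsOrderedAddMonoid M] (s : Finset ι) {f g : ι → M} {a : M}
    (ha : ∀ i ∈ s, f i ≤ a) (hg : ∀ i ∈ s, 0 ≤ g i) (ha0 : 0 ≤ a)
    (h : ∀ i ∈ s, ∀ j ∈ s, i ≠ j → f i ≤ g i ∨ f j ≤ g j) :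
    ∑ i ∈ s, f i ≤ a + ∑ i ∈ s, g i := by
  classical
  by_cases hbad : ∃ i ∈ s, g i < f i
  · obtain ⟨i, hi, hgf⟩ := hbad
    rw [← add_sum_erase s f hi]
    refine add_le_add (ha i hi) ((sum_le_sum fun j hj => ?_).trans
      (sum_le_sum_of_subset_of_nonneg (erase_subset i s) fun j hj _ => hg j hj))
    exact (h i hi j (mem_of_mem_erase hj) (ne_of_mem_erase hj).symm).resolve_left
      (not_le.mpr hgf)
  · push Not at hbad
    exact (sum_le_sum hbad).trans (le_add_of_nonneg_left ha0)

lemma sum_stake_le_of_finished (hC : 1 ≤ C) {j : Fin N} (hcard : 8 * C ≤ (S j).card) {n : ℕ}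
    {B : α → ℚ} (hfin : Finished C S j n B) :
    ∑ i ∈ range n, stake (8 * C) (S j).card i ≤ 1 / 2 * ∑ s ∈ S j, B s := by
  have h := mul_sum_stake_le (by omega) hcard n
  have hC0 : (0 : ℚ) < C := by exact_mod_cast hC
  unfold Finished at hfin
  push_cast at h
  nlinarith

lemma mul_le_stake_of_not_finished {j : Fin N} {n : ℕ} {B : α → ℚ}
    (hnf : ¬ Finished C S j n B) (hfair : ∀ s ∈ S j, ∀ t ∈ S j, B s = B t) {x : α}
    (hx : x ∈ S j) : C * B x ≤ stake (8 * C) (S j).card (n - 1) := by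
  have hm : (0 : ℚ) < (S j).card := by exact_mod_cast card_pos.mpr ⟨x, hx⟩
  have hsum : ∑ s ∈ S j, B s = (S j).card * B x := by
    rw [sum_congr rfl fun s hs => hfair s hs x hx, sum_const, nsmul_eq_mul]
  unfold Finished at hnf
  rw [not_lt, hsum] at hnf
  exact le_of_mul_le_mul_left (by linarith) hm

variable [DecidableEq α]

lemma Invariant.sum_weights_le {att : Fin N → List α} {b : BobState α}
    (hI : Invariant C S att b) (hC : 1 ≤ C) (hcard : ∀ j, 8 * C ≤ (S j).card)
    (hdisj : ∀ i j : Fin N, i ≠ j → Disjoint (S i) (S j))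
    (hb0 : 0 ≤ b.1) (hb1 : ∑ s ∈ SU S, b.1 s ≤ 1) : ∑ s ∈ SU S, weights C S att s ≤ 1 := by
  have hgood : ∀ j, att j = [] ∨ Finished C S j (att j).length b.1 →
      ∑ i ∈ range (att j).length, stake (8 * C) (S j).card i ≤ 1 / 2 * ∑ s ∈ S j, b.1 s := by
    rintro j (hnil | hfin)
    · rw [hnil, List.length_nil, sum_range_zero]
      exact mul_nonneg (by norm_num) (sum_nonneg fun s _ => hb0 s)
    · exact sum_stake_le_of_finished hC (hcard j) hfin
  rw [sum_weights hI.subset, sum_SU hdisj] at *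
  calc ∑ j, ∑ i ∈ range (att j).length, stake (8 * C) (S j).card i
      ≤ 1 / 2 + ∑ j, 1 / 2 * ∑ s ∈ S j, b.1 s := by
        refine sum_le_add_sum_of_le_except_one _
          (fun j _ => sum_stake_le_half (by omega) (hcard j) (hI.length_le j))
          (fun j _ => mul_nonneg (by norm_num) (sum_nonneg fun s _ => hb0 s)) (by norm_num)
          fun i _ j _ hij => ?_
        rcases lt_or_gt_of_ne hij with hlt | hlt
        · by_cases hj : att j = []
          · exact Or.inr (hgood j (Or.inl hj))
          · exact Or.inl (hgood i (Or.inr (hI.finished_of_lt j hj i hlt)))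
        · by_cases hi : att i = []
          · exact Or.inl (hgood i (Or.inl hi))
          · exact Or.inr (hgood j (Or.inr (hI.finished_of_lt i hi j hlt)))
    _ ≤ 1 := by rw [← mul_sum]; linarith

/-- Each finished set costs Bob more than `2 / 2 ^ (8 * C)`. -/
lemma unfinished_nonempty (hC : 1 ≤ C) (hN : 2 ^ (8 * C) ≤ N)
    (hcard : ∀ j, 8 * C ≤ (S j).card) (hdisj : ∀ i j : Fin N, i ≠ j → Disjoint (S i) (S j))
    (att : Fin N → List α) {B : α → ℚ}
    (hB : ∑ s ∈ SU S, B s ≤ 1) : (unfinished C S att B).Nonempty := by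
  classical
  by_contra hU
  have hcost : ∀ j, 2 / 2 ^ (8 * C) ≤ ∑ s ∈ S j, B s := by
    intro j
    have hfin : Finished C S j (att j).length B := by
      by_contra hnf
      exact hU ⟨j, mem_filter.mpr ⟨mem_univ j, hnf⟩⟩
    have hm : 0 < (S j).card := by have := hcard j; omega
    have hlow := div_le_card_mul_stake (c := 8 * C) hm ((att j).length - 1)
    have hC0 : (0 : ℚ) < C := by exact_mod_cast hC
    have hpow : ((8 * C : ℕ) : ℚ) / 2 ^ (8 * C + 2) = C * (2 / 2 ^ (8 * C)) := by
      rw [pow_add]; push_cast; field_simp; norm_num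
    rw [hpow] at hlow
    exact (lt_of_mul_lt_mul_left (hlow.trans_lt hfin) hC0.le).le
  have hN' : (2 : ℚ) ^ (8 * C) ≤ N := by exact_mod_cast hN
  have : (N : ℚ) * (2 / 2 ^ (8 * C)) ≤ 1 := by
    calc (N : ℚ) * (2 / 2 ^ (8 * C)) = ∑ _j : Fin N, 2 / 2 ^ (8 * C) := by simp
      _ ≤ ∑ j, ∑ s ∈ S j, B s := sum_le_sum fun j _ => hcost j
      _ ≤ 1 := by rwa [← sum_SU hdisj]
  rw [mul_div_assoc', div_le_iff₀ (by positivity)] at this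
  linarith [(by positivity : (0 : ℚ) < 2 ^ (8 * C))]

end Budget

section Run

lemma ghist_map_snd {α : Type} (σ : AStrat α) (τ : BStrat α) (k : ℕ) :
    (ghist σ τ k).map Prod.snd = (List.range k).map (bmove σ τ) := by
  induction k with
  | zero => rfl
  | succ k ih =>
    have hsucc : ghist σ τ (k + 1) = ghist σ τ k ++ [(amove σ τ k, bmove σ τ k)] := rfl
    rw [hsucc, List.map_append, ih, List.range_succ, List.map_append]
    rfl

variable {α : Type} [DecidableEq α] {N : ℕ} (C : ℕ) (S : Fin N → Finset α) (τ : BStrat α)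

noncomputable def attempts : ℕ → Fin N → List α
  | 0 => fun _ => []
  | k + 1 => step C S (attempts k) (bmove (alice C S) τ k)

/-- Bob's state when Alice makes her move of round `k`. -/
noncomputable def bobBefore : ℕ → BobState α
  | 0 => (0, ∅)
  | k + 1 => bmove (alice C S) τ k

abbrev BobLegalAt (k : ℕ) : Prop :=
  BobLegal S (fun k => (bmove (alice C S) τ k).1) (fun k => (bmove (alice C S) τ k).2) k

variable {C S τ}

lemma amove_alice (k : ℕ) : amove (alice C S) τ k = weights C S (attempts C S τ k) := by
  unfold amove alice
  rw [ghist_map_snd]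
  congr 1
  induction k with
  | zero => rfl
  | succ k ih =>
    rw [List.range_succ, List.map_append, List.foldl_append, ih]
    rfl

lemma bobBefore_le_succ {k : ℕ} (h : BobLegalAt C S τ k) :
    bobBefore C S τ k ≤ bobBefore C S τ (k + 1) := by
  cases k <;> exact ⟨h.1, h.2.2.2.2.1⟩

lemma bobBefore_nonneg {k : ℕ} (h : ∀ i < k, BobLegalAt C S τ i) :
    0 ≤ (bobBefore C S τ k).1 := by
  induction k with
  | zero => exact le_rfl
  | succ k ih =>
    exact (ih fun i hi => h i (by omega)).trans (bobBefore_le_succ (h k (by omega))).1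

lemma bobBefore_sum_le {k : ℕ} (h : ∀ i < k, BobLegalAt C S τ i) :
    ∑ s ∈ SU S, (bobBefore C S τ k).1 s ≤ 1 := by
  cases k with
  | zero => simp [bobBefore]
  | succ k => exact (h k k.lt_succ_self).2.2.1

lemma invariant_attempts {k : ℕ} (h : ∀ i < k, BobLegalAt C S τ i) :
    Invariant C S (attempts C S τ k) (bobBefore C S τ k) := by
  induction k with
  | zero => exact invariant_nil _
  | succ k ih =>
    exact (ih fun i hi => h i (by omega)).step (bobBefore_le_succ (h k (by omega)))

lemma aliceLegal_alice (hC : 1 ≤ C) (hcard : ∀ j, 8 * C ≤ (S j).card)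
    (hdisj : ∀ i j : Fin N, i ≠ j → Disjoint (S i) (S j)) {k : ℕ}
    (h : ∀ i < k, BobLegalAt C S τ i) : AliceLegal S (amove (alice C S) τ) k := by
  have hI := invariant_attempts h
  refine ⟨?_, ?_, fun s hs => ?_, ?_⟩
  · cases k with
    | zero => simp [amove_alice, attempts, weights]
    | succ k =>
      simp only [amove_alice, Nat.add_sub_cancel, Nat.add_one_ne_zero, if_false]
      exact weights_le_step _ _
  · cases k with
    | zero => simp [amove_alice, attempts, weights]
    | succ k =>
      simp only [amove_alice, Nat.add_sub_cancel, Nat.add_one_ne_zero, if_false]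
      exact finite_weights_step_ne _ _
  · rw [amove_alice]
    exact weights_eq_zero hI.subset hs
  · simp only [amove_alice]
    exact hI.sum_weights_le hC hcard hdisj (bobBefore_nonneg h) (bobBefore_sum_le h)

end Run

section Limit

lemma exists_forall_ge_eq_of_step {β : Type} {x : ℕ → β} {μ : β → ℕ} {b : ℕ}
    (hstep : ∀ k, x (k + 1) = x k ∨ μ (x k) < μ (x (k + 1))) (hb : ∀ k, μ (x k) ≤ b) :
    ∃ K, ∀ k ≥ K, x k = x K := by
  have hanti : Antitone fun k => b - μ (x k) := antitone_nat_of_succ_le fun k => by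
    rcases hstep k with h | h
    · rw [h]
    · omega
  obtain ⟨K, hK⟩ := WellFoundedLT.antitone_chain_condition hanti
  refine ⟨K, fun k hk => ?_⟩
  induction k, hk using Nat.le_induction with
  | base => rfl
  | succ k hk ih =>
    rcases hstep k with h | h
    · rw [h, ih]
    · have := hK k hk
      have := hK (k + 1) (by omega)
      have := hb (k + 1)
      omega

lemma mul_iSup_le_iSup {a b : ℕ → ℝ} {c t : ℝ} (hc : 0 ≤ c) (hb : ∀ k, c * b k ≤ t) {k₀ : ℕ}
    (ha : t ≤ a k₀) (hbdd : BddAbove (Set.range a)) : c * ⨆ k, b k ≤ ⨆ k, a k := by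
  rw [Real.mul_iSup_of_nonneg hc]
  exact (ciSup_le hb).trans (ha.trans (le_ciSup hbdd k₀))

variable {α : Type} {N C : ℕ} {S : Fin N → Finset α}

lemma step_eq_or_sum_length_lt (att : Fin N → List α) (b : BobState α) :
    step C S att b = att ∨ ∑ j, (att j).length < ∑ j, (step C S att b j).length := by
  rcases step_cases (C := C) (S := S) att b with h | ⟨j, x, -, -, -, -, h⟩
  · exact Or.inl h
  · refine Or.inr (sum_lt_sum (fun i _ => ?_) ⟨j, mem_univ j, ?_⟩) <;> rw [h]
    · rcases eq_or_ne i j with rfl | hij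
      · simp
      · rw [Function.update_of_ne hij]
    · simp

variable [DecidableEq α] {τ : BStrat α}

lemma attempts_eventually_eq (hall : ∀ k, BobLegalAt C S τ k) :
    ∃ K, ∀ k ≥ K, attempts C S τ k = attempts C S τ K :=
  exists_forall_ge_eq_of_step (μ := fun att => ∑ j, (att j).length)
    (fun _ => step_eq_or_sum_length_lt _ _)
    (fun _ => sum_le_sum fun j _ => (invariant_attempts fun i _ => hall i).length_le j)

lemma bobBefore_monotone (hall : ∀ k, BobLegalAt C S τ k) : Monotone (bobBefore C S τ) :=
  monotone_nat_of_le_succ fun k => bobBefore_le_succ (hall k)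

/-- Eventually Alice's attempts no longer change, and, Bob's weights only growing, the set of
unfinished `S j` (nonempty and shrinking) no longer changes either. -/
lemma eventually_isCurrent (hC : 1 ≤ C) (hN : 2 ^ (8 * C) ≤ N)
    (hcard : ∀ j, 8 * C ≤ (S j).card) (hdisj : ∀ i j : Fin N, i ≠ j → Disjoint (S i) (S j))
    (hall : ∀ k, BobLegalAt C S τ k) :
    ∃ att j K, ∀ k ≥ K,
      attempts C S τ k = att ∧ IsCurrent C S att (bobBefore C S τ k).1 j := by
  obtain ⟨K₀, hK₀⟩ := attempts_eventually_eq hall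
  set att := attempts C S τ K₀
  set U := fun k => unfinished C S att (bobBefore C S τ k).1
  have hanti : Antitone U := fun a b hab => unfinished_anti (bobBefore_monotone hall hab).1
  obtain ⟨K₁, hK₁⟩ := WellFoundedLT.antitone_chain_condition hanti
  have hU : (U K₁).Nonempty :=
    unfinished_nonempty hC hN hcard hdisj att (bobBefore_sum_le fun i _ => hall i)
  refine ⟨att, (U K₁).min' hU, max K₀ K₁, fun k hk => ⟨hK₀ k (le_of_max_le_left hk), ?_⟩⟩
  rw [isCurrent_iff_isLeast, show unfinished C S att _ = U k from rfl,
    ← hK₁ k (le_of_max_le_right hk)]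
  exact isLeast_min' _ hU

/-- Once Alice only waits in `S j`, one of her attempts there is enabled at every round, and all
but the last one are disabled. -/
lemma exists_getLast_enabled (hall : ∀ k, BobLegalAt C S τ k) {att : Fin N → List α}
    {j : Fin N} {K : ℕ}
    (hK : ∀ k ≥ K, attempts C S τ k = att ∧ IsCurrent C S att (bobBefore C S τ k).1 j) :
    ∃ hne : att j ≠ [], ∀ k, (att j).getLast hne ∉ (bmove (alice C S) τ k).2 := by
  have henabled : ∀ k ≥ K, ∃ s ∈ att j, s ∉ (bobBefore C S τ (k + 1)).2 := by
    intro k hk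
    have hstep := (hK (k + 1) (by omega)).1
    rw [attempts, (hK k hk).1] at hstep
    exact exists_enabled_of_step_eq (hK (k + 1) (by omega)).2 ((hall k).2.2.2.2.2 j) hstep
  obtain ⟨s, hs, -⟩ := henabled K le_rfl
  have hne : att j ≠ [] := List.ne_nil_of_mem hs
  refine ⟨hne, fun k hk => ?_⟩
  obtain ⟨s, hs, hsk⟩ := henabled (max k K) (le_max_right _ _)
  have hI : Invariant C S att (bobBefore C S τ (max k K + 1)) :=
    (hK (max k K + 1) (by omega)).1 ▸ invariant_attempts fun i _ => hall i
  have hlast : s = (att j).getLast hne := by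
    by_contra hne'
    exact hsk (hI.dropLast_disabled j s (List.mem_dropLast_of_mem_of_ne_getLast hs hne'))
  exact hsk (hlast ▸ (bobBefore_monotone hall (by omega : k + 1 ≤ max k K + 1)).2 hk)

lemma aliceLimitWin_alice (hC : 1 ≤ C) (hN : 2 ^ (8 * C) ≤ N)
    (hcard : ∀ j, 8 * C ≤ (S j).card) (hdisj : ∀ i j : Fin N, i ≠ j → Disjoint (S i) (S j))
    (hall : ∀ k, BobLegalAt C S τ k) :
    AliceLimitWin C (amove (alice C S) τ) (fun k => (bmove (alice C S) τ k).1)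
      (fun k => (bmove (alice C S) τ k).2) := by
  obtain ⟨att, j, K, hK⟩ := eventually_isCurrent hC hN hcard hdisj hall
  obtain ⟨hne, halive⟩ := exists_getLast_enabled hall hK
  set x := (att j).getLast hne
  have hx : x ∈ S j := ((hK K le_rfl).1 ▸ invariant_attempts fun i _ => hall i :
    Invariant C S att (bobBefore C S τ K)).subset j x (List.getLast_mem hne)
  set t := stake (8 * C) (S j).card ((att j).length - 1)
  have hbob : ∀ k, (C : ℝ) * ((bmove (alice C S) τ k).1 x : ℝ) ≤ t := by
    intro k
    have h1 := mul_le_stake_of_not_finished (hK (max k K + 1) (by omega)).2.1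
      ((hall (max k K)).2.2.2.1 j) hx
    have h2 := (bobBefore_monotone hall (by omega : k + 1 ≤ max k K + 1)).1 x
    exact_mod_cast (mul_le_mul_of_nonneg_left h2 (Nat.cast_nonneg C)).trans h1
  have halice : (t : ℝ) ≤ amove (alice C S) τ K x := by
    rw [amove_alice, (hK K le_rfl).1]
    exact_mod_cast
      (le_listWeight_getLast stake_nonneg hne).trans (listWeight_le_weights att j x)
  have hbdd : BddAbove (Set.range fun k => (amove (alice C S) τ k x : ℝ)) := by
    refine ⟨1, Set.forall_mem_range.2 fun k => ?_⟩
    have hsum :=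
      (aliceLegal_alice hC hcard hdisj fun i _ => hall i : AliceLegal S _ k).2.2.2
    simp only [amove_alice] at hsum ⊢
    exact_mod_cast (single_le_sum (fun s _ => weights_nonneg _ s) (mem_SU hx)).trans hsum
  exact ⟨x, halive, mul_iSup_le_iSup (Nat.cast_nonneg C) hbob halice hbdd⟩

end Limit

end WeightGame

/-- If `C ≥ 1`, `N ≥ 2^(8C)`, and `S_1, …, S_N` are pairwise disjoint
finite sets each of size at least `8C`, then Alice has a winning strategy in the weight
game on `S = S_1 ∪ … ∪ S_N`. -/
theorem stmt_16 {α : Type} [DecidableEq α] (C N : ℕ) (hC : 1 ≤ C) (hN : 2 ^ (8 * C) ≤ N)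
    (S : Fin N → Finset α) (hdisj : ∀ i j : Fin N, i ≠ j → Disjoint (S i) (S j))
    (hcard : ∀ j : Fin N, 8 * C ≤ (S j).card) :
    ∃ σ : AStrat α, ∀ τ : BStrat α, AliceWins C S σ τ := by
  classical
  refine ⟨WeightGame.alice C S, fun τ => ?_⟩
  by_cases hall : ∀ k, WeightGame.BobLegalAt C S τ k
  · exact Or.inr ⟨fun k => ⟨WeightGame.aliceLegal_alice hC hcard hdisj fun i _ => hall i, hall k⟩,
      WeightGame.aliceLimitWin_alice hC hN hcard hdisj hall⟩
  · push Not at hall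
    let k := Nat.find hall
    have hlegal : ∀ i < k, WeightGame.BobLegalAt C S τ i := fun i hi =>
      not_not.mp (Nat.find_min hall hi)
    exact Or.inl ⟨k, Nat.find_spec hall, fun j hj =>
      WeightGame.aliceLegal_alice hC hcard hdisj fun i hi => hlegal i (hi.trans_le hj)⟩
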